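/- Let G be a group, N ⊴ G of finite index with A = G/N, and L an irreducible N-representation over an algebraically closed field k with full stabilizer and associated twisted group algebra 𝒜 of dimension |A|. Then there is an isomorphism of k-algebras End_G(Ind_N^G(L)) ≅ 𝒜^{op}. -/

import Mathlib

/-!
For `a ∈ A` the operator `ρ_a : f ↦ (x ↦ θ_a (f (x * (ι a)⁻¹)))` on `Ind_N^G L` commutes with
`G`, and the defining relation of `α` gives `ρ_b ρ_a = α(a, b) ρ_{ab}`, so `x ↦ ∑ x_a ρ_a` is an
anti-homomorphism `𝒜 → End_G(Ind_N^G L)`.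

A `G`-endomorphism `φ` is determined by its components `ψ_b : v ↦ φ((ι b)⁻¹ • f_v)(1)`, where
`f_v` is the function supported on `N` with `f_v(1) = v`. Like `θ_b`, each `ψ_b` intertwines `L`
with its conjugate by `ι b`, so Schur's lemma gives `ψ_b = μ_b θ_b` and `φ = ∑ μ_b ρ_b`. The
components of `∑ x_a ρ_a` are `x_b θ_b`, which gives injectivity.
-/

set_option synthInstance.maxHeartbeats 1000000

section CliffordDefs

variable {k G V : Type*} [Field k] [Group G] [AddCommGroup V] [Module k V]

/-- A `k`-submodule `W` is stable under the elements of `S` acting through `ρ`. -/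
def repStable (ρ : Representation k G V) (S : Set G) (W : Submodule k V) : Prop :=
  ∀ g ∈ S, ∀ v ∈ W, ρ g v ∈ W

/-- The representation `ρ` is irreducible (simple). -/
def repIrreducible (ρ : Representation k G V) : Prop :=
  Nontrivial V ∧ ∀ W : Submodule k V, repStable ρ Set.univ W → W = ⊥ ∨ W = ⊤

/-- The carrier of the induced representation `Ind_H^G V`: functions `f : G → V`
with `f (g * h) = ρ h⁻¹ (f g)` for `h ∈ H`. -/
def indCar (H : Subgroup G) (ρ : Representation k H V) : Submodule k (G → V) where
  carrier := {f | ∀ (g : G) (h : H), f (g * ↑h) = ρ h⁻¹ (f g)}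
  add_mem' := by
    intro f₁ f₂ h₁ h₂ g h
    simp [h₁ g h, h₂ g h]
  zero_mem' := by intro g h; simp
  smul_mem' := by
    intro c f hf g h
    simp [hf g h]

/-- The induced representation of `G` on `indCar H ρ`, given by `(g • f) x = f (g⁻¹ * x)`. -/
def indRep (H : Subgroup G) (ρ : Representation k H V) : Representation k G (indCar H ρ) where
  toFun g :=
    { toFun := fun f => ⟨fun x => (f : G → V) (g⁻¹ * x), by
        intro x h
        show (f : G → V) (g⁻¹ * (x * ↑h)) = ρ h⁻¹ ((f : G → V) (g⁻¹ * x))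
        rw [← mul_assoc]
        exact f.2 (g⁻¹ * x) h⟩
      map_add' := by intro f₁ f₂; ext x; simp
      map_smul' := by intro c f; ext x; simp }
  map_one' := by ext f x; simp
  map_mul' := by intro g₁ g₂; ext f x; simp [mul_assoc]

end CliffordDefs

theorem repIrreducible.exists_eq_smul_id {k G V : Type*} [Field k] [IsAlgClosed k] [Group G]
    [AddCommGroup V] [Module k V] [FiniteDimensional k V] {ρ : Representation k G V}
    (hirr : repIrreducible ρ) (T : V →ₗ[k] V) (hT : ∀ g v, T (ρ g v) = ρ g (T v)) :
    ∃ μ : k, T = μ • LinearMap.id := by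
  have : Nontrivial V := hirr.1
  obtain ⟨μ, hμ⟩ := Module.End.exists_eigenvalue T
  have hstable : repStable ρ Set.univ (Module.End.eigenspace T μ) := by
    intro g _ v hv
    rw [Module.End.mem_eigenspace_iff] at hv ⊢
    rw [hT, hv, map_smul]
  have htop : Module.End.eigenspace T μ = ⊤ := (hirr.2 _ hstable).resolve_left hμ
  refine ⟨μ, LinearMap.ext fun v => ?_⟩
  exact Module.End.mem_eigenspace_iff.mp (htop ▸ Submodule.mem_top)

namespace Clifford

variable {k G V : Type*} [Field k] [Group G] [AddCommGroup V] [Module k V]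
  {N : Subgroup G} (ρ : Representation k N V)

lemma indCar_apply_mul (f : indCar N ρ) (g : G) (n : N) :
    (f : G → V) (g * n) = ρ n⁻¹ ((f : G → V) g) := f.2 g n

lemma indRep_apply (g : G) (f : indCar N ρ) (x : G) :
    (indRep N ρ g f : G → V) x = (f : G → V) (g⁻¹ * x) := rfl

open scoped Classical in
noncomputable def indSingle : V →ₗ[k] indCar N ρ where
  toFun v := ⟨fun g => if h : g ∈ N then ρ (⟨g, h⟩ : N)⁻¹ v else 0, by
    intro g n
    dsimp only
    by_cases hg : g ∈ N
    · have hgn : g * n ∈ N := N.mul_mem hg n.2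
      rw [dif_pos hg, dif_pos hgn]
      rw [show (⟨g * n, hgn⟩ : N) = ⟨g, hg⟩ * n from rfl, mul_inv_rev, map_mul,
        Module.End.mul_apply]
    · have hgn : g * n ∉ N := fun h => hg (by simpa using N.mul_mem h (N.inv_mem n.2))
      rw [dif_neg hg, dif_neg hgn, map_zero]⟩
  map_add' v w := by
    ext g
    by_cases hg : g ∈ N <;> simp [hg]
  map_smul' c v := by
    ext g
    by_cases hg : g ∈ N <;> simp [hg]

lemma indSingle_apply_of_mem (v : V) {g : G} (hg : g ∈ N) :
    (indSingle ρ v : G → V) g = ρ (⟨g, hg⟩ : N)⁻¹ v := by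
  classical
  exact dif_pos hg

lemma indSingle_apply_of_notMem (v : V) {g : G} (hg : g ∉ N) :
    (indSingle ρ v : G → V) g = 0 := by
  classical
  exact dif_neg hg

lemma indSingle_apply_one (v : V) : (indSingle ρ v : G → V) 1 = v := by
  rw [indSingle_apply_of_mem ρ v N.one_mem, show (⟨1, N.one_mem⟩ : N) = 1 from rfl, inv_one,
    map_one, Module.End.one_apply]

lemma indSingle_map (n : N) (v : V) : indSingle ρ (ρ n v) = indRep N ρ n (indSingle ρ v) := by
  ext g
  rw [indRep_apply]
  by_cases hg : g ∈ N
  · have hng : (n : G)⁻¹ * g ∈ N := N.mul_mem (N.inv_mem n.2) hg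
    rw [indSingle_apply_of_mem ρ _ hg, indSingle_apply_of_mem ρ _ hng,
      show (⟨(n : G)⁻¹ * g, hng⟩ : N)⁻¹ = (⟨g, hg⟩ : N)⁻¹ * n from Subtype.ext (by simp),
      map_mul, Module.End.mul_apply]
  · have hng : (n : G)⁻¹ * g ∉ N := fun h => hg (by simpa using N.mul_mem n.2 h)
    rw [indSingle_apply_of_notMem ρ _ hg, indSingle_apply_of_notMem ρ _ hng]

abbrev indEnd : Subalgebra k (Module.End k (indCar N ρ)) :=
  Subalgebra.centralizer k (Set.range (indRep N ρ))

variable {ρ}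

lemma apply_eq_apply_indRep_one {φ : Module.End k (indCar N ρ)}
    (hφ : φ ∈ indEnd ρ)
    (f : indCar N ρ) (x : G) :
    (φ f : G → V) x = (φ (indRep N ρ x⁻¹ f) : G → V) 1 := by
  rw [← Module.End.mul_apply, ← (Subalgebra.mem_centralizer_iff k).mp hφ _ ⟨x⁻¹, rfl⟩,
    Module.End.mul_apply, indRep_apply, inv_inv, mul_one]

variable (ρ) in
noncomputable def component (φ : Module.End k (indCar N ρ)) (g : G) : V →ₗ[k] V :=
  (LinearMap.proj 1 ∘ₗ (indCar N ρ).subtype) ∘ₗ φ ∘ₗ indRep N ρ g⁻¹ ∘ₗ indSingle ρ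

lemma component_apply (φ : Module.End k (indCar N ρ)) (g : G) (v : V) :
    component ρ φ g v = (φ (indRep N ρ g⁻¹ (indSingle ρ v)) : G → V) 1 := rfl

variable [hN : N.Normal]

variable (ρ) in
def IsConjEquivariant (g : G) (T : V →ₗ[k] V) : Prop :=
  ∀ (n : N) (v : V), T (ρ n v) = ρ ⟨g⁻¹ * n * g, hN.conj_mem' _ n.2 g⟩ (T v)

lemma IsConjEquivariant.comp {g h : G} {T S : V →ₗ[k] V} (hT : IsConjEquivariant ρ g T)
    (hS : IsConjEquivariant ρ h S) : IsConjEquivariant ρ (g * h) (S ∘ₗ T) := by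
  intro n v
  rw [LinearMap.comp_apply, hT, hS, LinearMap.comp_apply]
  congr 2
  ext
  simp [mul_assoc]

lemma IsConjEquivariant.exists_eq_smul [IsAlgClosed k] [FiniteDimensional k V]
    (hirr : repIrreducible ρ) {g : G} {T : V →ₗ[k] V} {θ : V ≃ₗ[k] V}
    (hT : IsConjEquivariant ρ g T) (hθ : IsConjEquivariant ρ g θ) :
    ∃ μ : k, T = μ • (θ : V →ₗ[k] V) := by
  have hequiv : ∀ (n : N) v, θ.symm (T (ρ n v)) = ρ n (θ.symm (T v)) := fun n v => by
    rw [hT, θ.symm_apply_eq, ← LinearEquiv.coe_coe, hθ, LinearEquiv.coe_coe,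
      LinearEquiv.apply_symm_apply]
  obtain ⟨μ, hμ⟩ := hirr.exists_eq_smul_id ((θ.symm : V →ₗ[k] V) ∘ₗ T) hequiv
  refine ⟨μ, LinearMap.ext fun v => ?_⟩
  have hv := LinearMap.congr_fun hμ v
  rw [LinearMap.comp_apply, LinearEquiv.coe_coe, θ.symm_apply_eq] at hv
  simpa using hv

lemma IsConjEquivariant.apply_mul_conj {g : G} {T : V →ₗ[k] V} (hT : IsConjEquivariant ρ g T)
    (f : indCar N ρ) (x : G) (n : N) :
    T ((f : G → V) (x * (g * n * g⁻¹))) = ρ n⁻¹ (T ((f : G → V) x)) := by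
  let m : N := ⟨g * n * g⁻¹, hN.conj_mem _ n.2 g⟩
  rw [show g * n * g⁻¹ = (m : G) from rfl, indCar_apply_mul, hT]
  congr 2
  ext
  simp [m, mul_assoc]

def rightTranslate (g : G) (T : V →ₗ[k] V) (hT : IsConjEquivariant ρ g T) :
    Module.End k (indCar N ρ) where
  toFun f := ⟨fun x => T ((f : G → V) (x * g⁻¹)), fun x n => by
    simpa [mul_assoc] using hT.apply_mul_conj f (x * g⁻¹) n⟩
  map_add' f f' := by ext; simp
  map_smul' c f := by ext; simp

lemma rightTranslate_apply (g : G) (T : V →ₗ[k] V) (hT : IsConjEquivariant ρ g T)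
    (f : indCar N ρ) (x : G) :
    (rightTranslate g T hT f : G → V) x = T ((f : G → V) (x * g⁻¹)) := rfl

lemma rightTranslate_mem_indEnd (g : G) (T : V →ₗ[k] V) (hT : IsConjEquivariant ρ g T) :
    rightTranslate g T hT ∈ indEnd ρ := by
  rw [Subalgebra.mem_centralizer_iff]
  rintro _ ⟨h, rfl⟩
  ext f x
  simp only [Module.End.mul_apply, indRep_apply, rightTranslate_apply, mul_assoc]

lemma rightTranslate_mul_eq_smul {g h u : G} {S T U : V →ₗ[k] V} (hS : IsConjEquivariant ρ h S)
    (hT : IsConjEquivariant ρ g T) (hU : IsConjEquivariant ρ u U) {m : N} (hm : g * h = u * m)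
    {c : k} (hSTU : ∀ v, ρ m (S (T v)) = c • U v) :
    rightTranslate h S hS * rightTranslate g T hT = c • rightTranslate u U hU := by
  ext f x
  have hx : x * u⁻¹ = x * (g * h)⁻¹ * ((g * h) * m * (g * h)⁻¹) := by
    rw [hm]; group
  simp only [Module.End.mul_apply, LinearMap.smul_apply, SetLike.val_smul, Pi.smul_apply,
    rightTranslate_apply, ← hSTU, hx]
  have hconj := (hT.comp hS).apply_mul_conj f (x * (g * h)⁻¹) m
  simp only [LinearMap.comp_apply] at hconj
  rw [hconj, Representation.self_inv_apply, mul_inv_rev, ← mul_assoc]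

lemma section_mul_mem_iff {ι : G ⧸ N → G} (hι : ∀ a, QuotientGroup.mk' N (ι a) = a)
    (b : G ⧸ N) (y : G) : ι b * y ∈ N ↔ b * y = 1 := by
  rw [← QuotientGroup.eq_one_iff, QuotientGroup.mk_mul, ← QuotientGroup.mk'_apply, hι]

lemma section_inv_mul_mul_mem {ι : G ⧸ N → G} (hι : ∀ a, QuotientGroup.mk' N (ι a) = a)
    (a b : G ⧸ N) :
    (ι (a * b))⁻¹ * ι a * ι b ∈ N := by
  rw [← QuotientGroup.eq_one_iff, ← QuotientGroup.mk'_apply]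
  simp only [map_mul, map_inv, hι]
  group

variable (ρ) in
lemma indCar_eq_sum_indRep_indSingle [Fintype (G ⧸ N)] {ι : G ⧸ N → G}
    (hι : ∀ a, QuotientGroup.mk' N (ι a) = a) (f : indCar N ρ) :
    f = ∑ b, indRep N ρ (ι b)⁻¹ (indSingle ρ ((f : G → V) (ι b)⁻¹)) := by
  ext y
  rw [AddSubmonoidClass.coe_finsetSum, Finset.sum_apply,
    Finset.sum_eq_single_of_mem (y : G ⧸ N)⁻¹ (Finset.mem_univ _)]
  · have hmem : ι (y : G ⧸ N)⁻¹ * y ∈ N := by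
      rw [section_mul_mem_iff hι, inv_mul_cancel]
    rw [indRep_apply, inv_inv, indSingle_apply_of_mem ρ _ hmem]
    simpa using (indCar_apply_mul ρ f (ι (y : G ⧸ N)⁻¹)⁻¹ ⟨_, hmem⟩)
  · intro b _ hb
    have hmem : ι b * y ∉ N := by
      rw [section_mul_mem_iff hι]
      exact fun h => hb (eq_inv_of_mul_eq_one_left h)
    rw [indRep_apply, inv_inv, indSingle_apply_of_notMem ρ _ hmem]

lemma isConjEquivariant_component {φ : Module.End k (indCar N ρ)}
    (hφ : φ ∈ indEnd ρ)
    (g : G) : IsConjEquivariant ρ g (component ρ φ g) := by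
  intro n v
  set m : N := ⟨g⁻¹ * n * g, hN.conj_mem' _ n.2 g⟩
  have hcomm : indRep N ρ g⁻¹ (indRep N ρ n (indSingle ρ v)) =
      indRep N ρ m (indRep N ρ g⁻¹ (indSingle ρ v)) := by
    rw [← Module.End.mul_apply, ← Module.End.mul_apply, ← map_mul, ← map_mul]
    congr 2
    simp [m, mul_assoc]
  rw [component_apply, component_apply, indSingle_map, hcomm, ← Module.End.mul_apply,
    ← (Subalgebra.mem_centralizer_iff k).mp hφ _ ⟨m, rfl⟩, Module.End.mul_apply, indRep_apply,
    mul_one, ← one_mul (m⁻¹ : G), ← Subgroup.coe_inv, indCar_apply_mul, inv_inv]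

lemma eq_sum_rightTranslate_component [Fintype (G ⧸ N)] {ι : G ⧸ N → G}
    (hι : ∀ a, QuotientGroup.mk' N (ι a) = a) {φ : Module.End k (indCar N ρ)}
    (hφ : φ ∈ indEnd ρ) :
    φ = ∑ b, rightTranslate (ι b) (component ρ φ (ι b)) (isConjEquivariant_component hφ _) := by
  ext f x
  rw [apply_eq_apply_indRep_one hφ, indCar_eq_sum_indRep_indSingle ρ hι (indRep N ρ x⁻¹ f),
    map_sum, LinearMap.sum_apply, AddSubmonoidClass.coe_finsetSum,
    AddSubmonoidClass.coe_finsetSum, Finset.sum_apply, Finset.sum_apply]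
  refine Finset.sum_congr rfl fun b _ => ?_
  rw [rightTranslate_apply, component_apply, indRep_apply, inv_inv]

lemma component_rightTranslate (g h : G) (T : V →ₗ[k] V) (hT : IsConjEquivariant ρ g T) (v : V) :
    component ρ (rightTranslate g T hT) h v = T ((indSingle ρ v : G → V) (h * g⁻¹)) := by
  rw [component_apply, rightTranslate_apply, indRep_apply, inv_inv, one_mul]

section TwistedGroupAlgebra

variable [Fintype (G ⧸ N)] {ι : G ⧸ N → G} {θ : G ⧸ N → V ≃ₗ[k] V}
  (hθ : ∀ a, IsConjEquivariant ρ (ι a) (θ a))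

noncomputable def ofCoeffs : (G ⧸ N → k) →ₗ[k] Module.End k (indCar N ρ) :=
  Fintype.linearCombination k fun a => rightTranslate (ι a) (θ a) (hθ a)

lemma ofCoeffs_apply (x : G ⧸ N → k) :
    ofCoeffs hθ x = ∑ a, x a • rightTranslate (ι a) (θ a) (hθ a) :=
  Fintype.linearCombination_apply _ _ _

lemma ofCoeffs_mem_indEnd (x : G ⧸ N → k) :
    ofCoeffs hθ x ∈ indEnd ρ := by
  rw [ofCoeffs_apply]
  exact sum_mem fun a _ => Subalgebra.smul_mem _ (rightTranslate_mem_indEnd _ _ _) _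

lemma component_ofCoeffs (hι : ∀ a, QuotientGroup.mk' N (ι a) = a) (x : G ⧸ N → k) (b : G ⧸ N) :
    component ρ (ofCoeffs hθ x) (ι b) = x b • (θ b : V →ₗ[k] V) := by
  ext v
  rw [component_apply, ofCoeffs_apply, LinearMap.sum_apply, AddSubmonoidClass.coe_finsetSum,
    Finset.sum_apply, Finset.sum_eq_single_of_mem b (Finset.mem_univ _)]
  · simp only [LinearMap.smul_apply, SetLike.val_smul, Pi.smul_apply]
    rw [← component_apply, component_rightTranslate, mul_inv_cancel, indSingle_apply_one]
  · intro a _ hab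
    have hmem : ι b * (ι a)⁻¹ ∉ N := by
      rw [section_mul_mem_iff hι, QuotientGroup.mk_inv, ← QuotientGroup.mk'_apply, hι,
        mul_inv_eq_one]
      exact Ne.symm hab
    simp only [LinearMap.smul_apply, SetLike.val_smul, Pi.smul_apply]
    rw [← component_apply, component_rightTranslate, indSingle_apply_of_notMem ρ _ hmem, map_zero,
      smul_zero]

lemma ofCoeffs_injective [Nontrivial V] (hι : ∀ a, QuotientGroup.mk' N (ι a) = a) :
    Function.Injective (ofCoeffs hθ) := by
  rw [injective_iff_map_eq_zero]
  intro x hx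
  funext b
  obtain ⟨v, hv⟩ := exists_ne (0 : V)
  have hcomp := LinearMap.congr_fun (component_ofCoeffs hθ hι x b) v
  rw [hx] at hcomp
  have hzero : x b • θ b v = 0 := hcomp.symm
  exact (smul_eq_zero.mp hzero).resolve_right ((θ b).map_ne_zero_iff.mpr hv)

lemma exists_ofCoeffs_eq [IsAlgClosed k] [FiniteDimensional k V] (hirr : repIrreducible ρ)
    (hι : ∀ a, QuotientGroup.mk' N (ι a) = a) {φ : Module.End k (indCar N ρ)}
    (hφ : φ ∈ indEnd ρ) :
    ∃ x, ofCoeffs hθ x = φ := by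
  choose μ hμ using fun b => (isConjEquivariant_component hφ (ι b)).exists_eq_smul hirr (hθ b)
  refine ⟨μ, ?_⟩
  conv_rhs => rw [eq_sum_rightTranslate_component hι hφ]
  rw [ofCoeffs_apply]
  refine Finset.sum_congr rfl fun b _ => ?_
  ext f x
  rw [LinearMap.smul_apply, SetLike.val_smul, Pi.smul_apply, rightTranslate_apply,
    rightTranslate_apply, hμ]
  rfl

lemma ofCoeffs_twistedMul {α : G ⧸ N → G ⧸ N → k}
    (hmul : ∀ a b, rightTranslate (ι b) (θ b) (hθ b) * rightTranslate (ι a) (θ a) (hθ a) =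
      α a b • rightTranslate (ρ := ρ) (ι (a * b)) (θ (a * b)) (hθ (a * b))) (x y : G ⧸ N → k) :
    ofCoeffs hθ (fun c => ∑ a, α a (a⁻¹ * c) * x a * y (a⁻¹ * c)) =
      ofCoeffs hθ y * ofCoeffs hθ x := by
  rw [ofCoeffs_apply, ofCoeffs_apply, ofCoeffs_apply, Finset.sum_mul_sum, Finset.sum_comm]
  simp_rw [Finset.sum_smul, smul_mul_smul_comm, hmul, smul_smul]
  rw [Finset.sum_comm]
  refine Finset.sum_congr rfl fun a _ => Fintype.sum_equiv (Equiv.mulLeft a⁻¹) _ _ fun c => ?_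
  rw [Equiv.coe_mulLeft, mul_inv_cancel_left]
  congr 1
  ring

lemma ofCoeffs_ite_eq_one [DecidableEq (G ⧸ N)] (hι1 : ι 1 = 1) (hθ1 : θ 1 = LinearEquiv.refl k V) :
    ofCoeffs hθ (fun c => if c = 1 then 1 else 0) = 1 := by
  rw [ofCoeffs_apply, Finset.sum_eq_single_of_mem 1 (Finset.mem_univ _) fun a _ ha => by
    rw [if_neg ha, zero_smul], if_pos rfl, one_smul]
  ext f x
  rw [rightTranslate_apply, hι1, hθ1, inv_one, mul_one]
  rfl

end TwistedGroupAlgebra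

end Clifford

/-- Let `N ⊴ G` of finite index, `L = (V, ρ)` an irreducible finite-dimensional
`N`-representation over an algebraically closed field with full stabilizer, witnessed by
isomorphisms `θ_a : L ≅ {}^{ι a} L` with associated normalized 2-cocycle `α` and twisted
group algebra `𝒜` (realized as the twisted convolution algebra on `A → k`).  Then
`End_G(Ind_N^G L)` — the centralizer of the image of `G` in `End_k(Ind_N^G L)` — is
isomorphic as a `k`-algebra to `𝒜^op`: there is a `k`-linear bijection
`e : 𝒜 → End_G(Ind_N^G L)` with `e (x ⋆ y) = e y * e x` and `e ρ_1 = 1`. -/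
theorem end_ind_iso_twisted_group_algebra_op {k G V : Type*} [Field k] [IsAlgClosed k]
    [Group G] [AddCommGroup V] [Module k V] [FiniteDimensional k V]
    (N : Subgroup G) [hN : N.Normal] [Fintype (G ⧸ N)] [DecidableEq (G ⧸ N)]
    (ρ : Representation k N V) (hirr : repIrreducible ρ)
    (ι : G ⧸ N → G) (hι : ∀ a, QuotientGroup.mk' N (ι a) = a) (hι1 : ι 1 = 1)
    (θ : G ⧸ N → (V ≃ₗ[k] V)) (hθ1 : θ 1 = LinearEquiv.refl k V)
    (hθ : ∀ (a : G ⧸ N) (n : N) (v : V),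
      θ a (ρ n v) =
        ρ ⟨(ι a)⁻¹ * ↑n * ι a, by simpa using hN.conj_mem _ n.2 (ι a)⁻¹⟩ (θ a v))
    (α : G ⧸ N → G ⧸ N → kˣ)
    (hα : ∀ (a b : G ⧸ N) (v : V),
      ρ ⟨(ι (a * b))⁻¹ * ι a * ι b, by
          rw [← QuotientGroup.eq_one_iff]
          show (QuotientGroup.mk' N) ((ι (a * b))⁻¹ * ι a * ι b) = 1
          simp only [map_mul, map_inv, hι]
          group⟩
        (θ b (θ a v)) = (α a b : k) • θ (a * b) v)
    (mulA : ((G ⧸ N) → k) → ((G ⧸ N) → k) → ((G ⧸ N) → k))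
    (hmulA : ∀ x y c, mulA x y c = ∑ a : G ⧸ N, (α a (a⁻¹ * c) : k) * x a * y (a⁻¹ * c)) :
    ∃ e : ((G ⧸ N) → k) ≃ₗ[k]
        (Subalgebra.centralizer k (Set.range (⇑(indRep N ρ)) :
          Set (Module.End k (indCar N ρ)))),
      (∀ x y, e (mulA x y) = e y * e x) ∧
      e (fun c => if c = 1 then 1 else 0) = 1 := by
  have hθ' : ∀ a, Clifford.IsConjEquivariant ρ (ι a) (θ a) := hθ
  have : Nontrivial V := hirr.1
  have hmul : ∀ a b,
      Clifford.rightTranslate (ι b) (θ b : V →ₗ[k] V) (hθ' b) *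
          Clifford.rightTranslate (ι a) (θ a : V →ₗ[k] V) (hθ' a) =
        (α a b : k) • Clifford.rightTranslate (ι (a * b)) (θ (a * b) : V →ₗ[k] V) (hθ' (a * b)) :=
    fun a b => Clifford.rightTranslate_mul_eq_smul
      (m := ⟨_, Clifford.section_inv_mul_mul_mem hι a b⟩) (hθ' b) (hθ' a) (hθ' (a * b))
      (by simp [mul_assoc]) (hα a b)
  let e := (Clifford.ofCoeffs hθ').codRestrict (Clifford.indEnd ρ).toSubmodule
    (Clifford.ofCoeffs_mem_indEnd hθ')
  have he : Function.Bijective e := by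
    refine ⟨fun x y hxy => Clifford.ofCoeffs_injective hθ' hι (congrArg Subtype.val hxy), ?_⟩
    rintro ⟨φ, hφ⟩
    obtain ⟨x, hx⟩ := Clifford.exists_ofCoeffs_eq hθ' hirr hι hφ
    exact ⟨x, Subtype.ext hx⟩
  refine ⟨LinearEquiv.ofBijective e he, fun x y => Subtype.ext ?_, Subtype.ext ?_⟩
  · rw [show mulA x y = _ from funext (hmulA x y)]
    exact Clifford.ofCoeffs_twistedMul hθ' hmul x y
  · exact Clifford.ofCoeffs_ite_eq_one hθ' hι1 hθ1
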